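/- arXiv:1304.0874 — 5 statements merged into one kernel-verified Lean document; each statement's English description precedes it below -/
import Mathlib

section
/- For distinct primes p and q, the polynomial f(X) = p + p q^2 X + p q^2 X^2 + p q^2 X^3 + q^2 X^4 + p q^2 X^5 + p q^2 X^6 is irreducible over Q. -/
open Polynomial

noncomputable def Fpoly (p q : ℤ) : ℤ[X] :=
  C p + C (p * q^2) * X + C (p * q^2) * X^2 + C (p * q^2) * X^3 + C (q^2) * X^4 +
    C (p * q^2) * X^5 + C (p * q^2) * X^6

lemma Fmap_q (p q : ℕ) : (Fpoly p q).map (Int.castRingHom (ZMod q)) = C (p : ZMod q) := by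
  simp [Fpoly, Polynomial.map_add, Polynomial.map_mul, Polynomial.map_pow, map_C, map_X,
    ZMod.natCast_self]

lemma Fmap_p (p q : ℕ) :
    (Fpoly p q).map (Int.castRingHom (ZMod p)) = C ((q : ZMod p)^2) * X^4 := by
  simp [Fpoly, Polynomial.map_add, Polynomial.map_mul, Polynomial.map_pow, map_C, map_X,
    ZMod.natCast_self]

lemma not_both_dvd (P : ℤ) (hP : Prime P) (a b : ℤ) (e0 : a * b = P)
    (ha : P ∣ a) (hb : P ∣ b) : False := by
  obtain ⟨a', rfl⟩ := ha
  obtain ⟨b', rfl⟩ := hb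
  have h1 : a' * (P * b') = 1 :=
    mul_left_cancel₀ hP.ne_zero (by linear_combination e0)
  exact hP.not_dvd_one ⟨a' * b', by linear_combination -h1⟩

lemma const_mod_facts (r : ℕ) (hr : r.Prime) (g h : ℤ[X]) (c : ZMod r) (hc : c ≠ 0)
    (hm : (g.map (Int.castRingHom (ZMod r))) * (h.map (Int.castRingHom (ZMod r))) = C c) :
    (∀ i, 1 ≤ i → (r:ℤ) ∣ g.coeff i) ∧ (∀ i, 1 ≤ i → (r:ℤ) ∣ h.coeff i) ∧
      ¬ (r:ℤ) ∣ g.coeff 0 ∧ ¬ (r:ℤ) ∣ h.coeff 0 := by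
  haveI := Fact.mk hr
  set G := g.map (Int.castRingHom (ZMod r)) with hG
  set H := h.map (Int.castRingHom (ZMod r)) with hH
  have hCc : (C c : (ZMod r)[X]) ≠ 0 := C_ne_zero.mpr hc
  have hG0 : G ≠ 0 := fun h0 => hCc (by rw [← hm, h0, zero_mul])
  have hH0 : H ≠ 0 := fun h0 => hCc (by rw [← hm, h0, mul_zero])
  have hdeg : G.natDegree + H.natDegree = 0 := by
    rw [← natDegree_mul hG0 hH0, hm, natDegree_C]
  have hGd : G.natDegree = 0 := by omega
  have hHd : H.natDegree = 0 := by omega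
  have key : ∀ (P : ℤ[X]), (P.map (Int.castRingHom (ZMod r))).natDegree = 0 →
      ∀ i, 1 ≤ i → (r:ℤ) ∣ P.coeff i := by
    intro P hP i hi
    have : (P.map (Int.castRingHom (ZMod r))).coeff i = 0 :=
      coeff_eq_zero_of_natDegree_lt (by omega)
    rw [coeff_map] at this
    simpa [ZMod.intCast_zmod_eq_zero_iff_dvd] using this
  have hc0 : G.coeff 0 * H.coeff 0 = c := by
    have := congrArg (fun P => P.coeff 0) hm
    simpa [mul_coeff_zero] using this
  have hGc0 : G.coeff 0 ≠ 0 := fun h0 => hc (by rw [← hc0, h0, zero_mul])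
  have hHc0 : H.coeff 0 ≠ 0 := fun h0 => hc (by rw [← hc0, h0, mul_zero])
  refine ⟨key g hGd, key h hHd, ?_, ?_⟩
  · intro hd
    exact hGc0 (by rw [hG, coeff_map]; simpa [ZMod.intCast_zmod_eq_zero_iff_dvd] using hd)
  · intro hd
    exact hHc0 (by rw [hH, coeff_map]; simpa [ZMod.intCast_zmod_eq_zero_iff_dvd] using hd)

lemma X_pow_cases (r : ℕ) (hr : r.Prime) (g h : ℤ[X]) (c : ZMod r) (hc : c ≠ 0)
    (hm : (g.map (Int.castRingHom (ZMod r))) * (h.map (Int.castRingHom (ZMod r)))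
        = C c * X^4) :
    ((r:ℤ) ∣ g.coeff 0 ∧ (r:ℤ) ∣ h.coeff 0) ∨
      (4 ≤ (h.map (Int.castRingHom (ZMod r))).natDegree) ∨
      (4 ≤ (g.map (Int.castRingHom (ZMod r))).natDegree) := by
  haveI := Fact.mk hr
  set G := g.map (Int.castRingHom (ZMod r)) with hG
  set H := h.map (Int.castRingHom (ZMod r)) with hH
  have hrhs : (C c * X^4 : (ZMod r)[X]) ≠ 0 :=
    mul_ne_zero (C_ne_zero.mpr hc) (pow_ne_zero _ X_ne_zero)
  have hG0 : G ≠ 0 := fun h0 => hrhs (by rw [← hm, h0, zero_mul])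
  have hH0 : H ≠ 0 := fun h0 => hrhs (by rw [← hm, h0, mul_zero])
  have hX4 : (X : (ZMod r)[X])^4 ∣ G * H := ⟨C c, by rw [hm]; ring⟩
  by_cases hXG : (X : (ZMod r)[X]) ∣ G
  · by_cases hXH : (X : (ZMod r)[X]) ∣ H
    · left
      rw [X_dvd_iff, hG, coeff_map] at hXG
      rw [X_dvd_iff, hH, coeff_map] at hXH
      constructor
      · simpa [ZMod.intCast_zmod_eq_zero_iff_dvd] using hXG
      · simpa [ZMod.intCast_zmod_eq_zero_iff_dvd] using hXH
    · right; right
      have : (X : (ZMod r)[X])^4 ∣ G := by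
        rw [mul_comm] at hX4
        exact prime_X.pow_dvd_of_dvd_mul_left 4 hXH hX4
      simpa [natDegree_X_pow] using natDegree_le_of_dvd this hG0
  · right; left
    have : (X : (ZMod r)[X])^4 ∣ H :=
      prime_X.pow_dvd_of_dvd_mul_left 4 hXG hX4
    simpa [natDegree_X_pow] using natDegree_le_of_dvd this hH0

lemma e0_eq (p q : ℕ) (g h : ℤ[X]) (hf : Fpoly p q = g * h) :
    g.coeff 0 * h.coeff 0 = (p:ℤ) := by
  have := congrArg (fun P => P.coeff 0) hf
  simp only [mul_coeff_zero] at this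
  rw [← this]
  simp [Fpoly, coeff_X_pow]

lemma no_deg_three (p q : ℕ) (hp : p.Prime) (hq : q.Prime) (hpq : p ≠ q) (g h : ℤ[X])
    (hf : Fpoly p q = g * h) (hdg : g.natDegree = 3) (hdh : h.natDegree = 3) : False := by
  have hP : Prime (p:ℤ) := Nat.prime_iff_prime_int.mp hp
  haveI := Fact.mk hp
  have hc : ((q : ZMod p)^2) ≠ 0 := by
    apply pow_ne_zero
    intro h0
    rw [ZMod.natCast_eq_zero_iff] at h0
    exact hpq ((Nat.prime_dvd_prime_iff_eq hp hq).mp h0)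
  have hm : (g.map (Int.castRingHom (ZMod p))) * (h.map (Int.castRingHom (ZMod p)))
      = C ((q : ZMod p)^2) * X^4 := by
    rw [← Polynomial.map_mul, ← hf, Fmap_p]
  rcases X_pow_cases p hp g h _ hc hm with ⟨h1, h2⟩ | h1 | h1
  · exact not_both_dvd _ hP _ _ (e0_eq p q g h hf) h1 h2
  · have := natDegree_map_le (f := Int.castRingHom (ZMod p)) (p := h)
    omega
  · have := natDegree_map_le (f := Int.castRingHom (ZMod p)) (p := g)
    omega

lemma no_deg_one (p q : ℕ) (hp : p.Prime) (hq : q.Prime) (hpq : p ≠ q) (g h : ℤ[X])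
    (hf : Fpoly p q = g * h) (hdg : g.natDegree = 1) (hdh : h.natDegree = 5) : False := by
  have hP : Prime (p:ℤ) := Nat.prime_iff_prime_int.mp hp
  haveI := Fact.mk hp
  have hc : ((q : ZMod p)^2) ≠ 0 := by
    apply pow_ne_zero
    intro h0
    rw [ZMod.natCast_eq_zero_iff] at h0
    exact hpq ((Nat.prime_dvd_prime_iff_eq hp hq).mp h0)
  have hm : (g.map (Int.castRingHom (ZMod p))) * (h.map (Int.castRingHom (ZMod p)))
      = C ((q : ZMod p)^2) * X^4 := by
    rw [← Polynomial.map_mul, ← hf, Fmap_p]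
  set G := g.map (Int.castRingHom (ZMod p)) with hG
  set H := h.map (Int.castRingHom (ZMod p)) with hH
  rcases X_pow_cases p hp g h _ hc hm with ⟨h1, h2⟩ | h1 | h1
  · exact not_both_dvd _ hP _ _ (e0_eq p q g h hf) h1 h2
  · rw [← hH] at h1
    have hrhs : (C ((q : ZMod p)^2) * X^4 : (ZMod p)[X]) ≠ 0 :=
      mul_ne_zero (C_ne_zero.mpr hc) (pow_ne_zero _ X_ne_zero)
    have hG0 : G ≠ 0 := fun h0 => hrhs (by rw [← hm, h0, zero_mul])
    have hH0 : H ≠ 0 := fun h0 => hrhs (by rw [← hm, h0, mul_zero])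
    have hdeg4 : G.natDegree + H.natDegree = 4 := by
      rw [← natDegree_mul hG0 hH0, hm, natDegree_C_mul_X_pow _ _ hc]
    have hGd : G.natDegree = 0 := by omega
    have hg1 : (p:ℤ) ∣ g.coeff 1 := by
      have : G.coeff 1 = 0 := coeff_eq_zero_of_natDegree_lt (by omega)
      rw [hG, coeff_map] at this
      simpa [ZMod.intCast_zmod_eq_zero_iff_dvd] using this
    have hh5' : (p:ℤ) ∣ h.coeff 5 := by
      have : H.coeff 5 = 0 := coeff_eq_zero_of_natDegree_lt (by omega)
      rw [hH, coeff_map] at this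
      simpa [ZMod.intCast_zmod_eq_zero_iff_dvd] using this
    have hg2 : g.coeff 2 = 0 := coeff_eq_zero_of_natDegree_lt (by omega)
    have hg3 : g.coeff 3 = 0 := coeff_eq_zero_of_natDegree_lt (by omega)
    have hg4 : g.coeff 4 = 0 := coeff_eq_zero_of_natDegree_lt (by omega)
    have hg5 : g.coeff 5 = 0 := coeff_eq_zero_of_natDegree_lt (by omega)
    have hg6 : g.coeff 6 = 0 := coeff_eq_zero_of_natDegree_lt (by omega)
    have hh6 : h.coeff 6 = 0 := coeff_eq_zero_of_natDegree_lt (by omega)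
    have e6 := congrArg (fun P => P.coeff 6) hf
    simp only [coeff_mul, Finset.Nat.sum_antidiagonal_eq_sum_range_succ_mk,
      Finset.sum_range_succ, Finset.sum_range_zero, hg2, hg3, hg4, hg5, hg6, hh6,
      zero_mul, mul_zero, add_zero, zero_add] at e6
    simp only [Fpoly, coeff_add, coeff_C_mul, coeff_X_pow, coeff_C, coeff_X] at e6
    norm_num at e6
    have E6 : g.coeff 1 * h.coeff 5 = (p:ℤ) * (q:ℤ)^2 := by linarith
    obtain ⟨a, ha⟩ := hg1
    obtain ⟨b, hb⟩ := hh5'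
    have hq2 : (p:ℤ) ∣ (q:ℤ)^2 := by
      have hcan : (q:ℤ)^2 = a * ((p:ℤ) * b) := by
        apply mul_left_cancel₀ hP.ne_zero
        rw [← E6, ha, hb]; ring
      exact ⟨a * b, by rw [hcan]; ring⟩
    have hd : (p:ℤ) ∣ (q:ℤ) := hP.dvd_of_dvd_pow hq2
    rw [Int.natCast_dvd_natCast] at hd
    exact hpq ((Nat.prime_dvd_prime_iff_eq hp hq).mp hd)
  · have := natDegree_map_le (f := Int.castRingHom (ZMod p)) (p := g)
    omega

lemma no_deg_two (p q : ℕ) (hp : p.Prime) (hq : q.Prime) (hpq : p ≠ q) (g h : ℤ[X])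
    (hf : Fpoly p q = g * h) (hdg : g.natDegree = 2) (hdh : h.natDegree = 4) : False := by
  have hQ : Prime (q:ℤ) := Nat.prime_iff_prime_int.mp hq
  haveI := Fact.mk hq
  have hcq : ((p : ZMod q)) ≠ 0 := by
    intro h0
    rw [ZMod.natCast_eq_zero_iff] at h0
    exact hpq ((Nat.prime_dvd_prime_iff_eq hq hp).mp h0).symm
  have hm : (g.map (Int.castRingHom (ZMod q))) * (h.map (Int.castRingHom (ZMod q)))
      = C ((p : ZMod q)) := by
    rw [← Polynomial.map_mul, ← hf, Fmap_q]
  obtain ⟨hgd, hhd, hg0, hh0⟩ := const_mod_facts q hq g h _ hcq hm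
  have hQP : ¬ (q:ℤ) ∣ (p:ℤ) := by
    intro hd
    rw [Int.natCast_dvd_natCast] at hd
    exact hpq ((Nat.prime_dvd_prime_iff_eq hq hp).mp hd).symm
  have hg3 : g.coeff 3 = 0 := coeff_eq_zero_of_natDegree_lt (by omega)
  have hg4 : g.coeff 4 = 0 := coeff_eq_zero_of_natDegree_lt (by omega)
  have hg5 : g.coeff 5 = 0 := coeff_eq_zero_of_natDegree_lt (by omega)
  have hg6 : g.coeff 6 = 0 := coeff_eq_zero_of_natDegree_lt (by omega)
  have hh5 : h.coeff 5 = 0 := coeff_eq_zero_of_natDegree_lt (by omega)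
  have hh6 : h.coeff 6 = 0 := coeff_eq_zero_of_natDegree_lt (by omega)
  have e2 := congrArg (fun P => P.coeff 2) hf
  have e3 := congrArg (fun P => P.coeff 3) hf
  have e4 := congrArg (fun P => P.coeff 4) hf
  have e6 := congrArg (fun P => P.coeff 6) hf
  simp only [coeff_mul, Finset.Nat.sum_antidiagonal_eq_sum_range_succ_mk,
    Finset.sum_range_succ, Finset.sum_range_zero, hg3, hg4, hg5, hg6, hh5, hh6,
    zero_mul, mul_zero, add_zero, zero_add] at e2 e3 e4 e6
  simp only [Fpoly, coeff_add, coeff_C_mul, coeff_X_pow, coeff_C, coeff_X] at e2 e3 e4 e6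
  norm_num at e2 e3 e4 e6
  set Q : ℤ := (q:ℤ) with hQdef
  set g0 := g.coeff 0; set g1 := g.coeff 1; set g2 := g.coeff 2
  set h0 := h.coeff 0; set h1 := h.coeff 1; set h2 := h.coeff 2
  set h3 := h.coeff 3; set h4 := h.coeff 4
  -- e2 : ↑p * Q ^ 2 = g0 * h2 + g1 * h1 + g2 * h0
  -- e3 : ↑p * Q ^ 2 = g0 * h3 + g1 * h2 + g2 * h1
  -- e4 : Q ^ 2 = g0 * h4 + g1 * h3 + g2 * h2
  -- e6 : ↑p * Q ^ 2 = g2 * h4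
  have dg1 : Q ∣ g1 := hgd 1 (by omega)
  have dg2 : Q ∣ g2 := hgd 2 (by omega)
  have dh1 : Q ∣ h1 := hhd 1 (by omega)
  have dh2 : Q ∣ h2 := hhd 2 (by omega)
  -- step 0 : ¬ Q^2 ∣ h4
  have hnh4 : ¬ Q^2 ∣ h4 := by
    intro hd
    obtain ⟨u, hu⟩ := dg2
    obtain ⟨v, hv⟩ := hd
    have key : Q^2 * (p:ℤ) = Q^2 * (Q * (u * v)) := by
      linear_combination e6 + h4*hu + (Q*u)*hv
    have hP' : (p:ℤ) = Q * (u*v) := mul_left_cancel₀ (pow_ne_zero 2 hQ.ne_zero) key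
    exact hQP ⟨u*v, hP'⟩
  -- step A : Q^2 ∣ g0*h2 + g2*h0
  have stepA : Q^2 ∣ g0*h2 + g2*h0 := by
    have h11 : Q^2 ∣ g1*h1 := by
      have := mul_dvd_mul dg1 dh1
      simpa [sq] using this
    have heq : g0*h2 + g2*h0 = (p:ℤ)*Q^2 - g1*h1 := by linear_combination -e2
    rw [heq]
    exact dvd_sub (Dvd.intro_left _ rfl) h11
  -- step B : Q^2 ∣ h3
  have stepB : Q^2 ∣ h3 := by
    have h12 : Q^2 ∣ g1*h2 := by
      have := mul_dvd_mul dg1 dh2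
      simpa [sq] using this
    have h21 : Q^2 ∣ g2*h1 := by
      have := mul_dvd_mul dg2 dh1
      simpa [sq] using this
    have hd : Q^2 ∣ g0*h3 := by
      have heq : g0*h3 = (p:ℤ)*Q^2 - g1*h2 - g2*h1 := by linear_combination -e3
      rw [heq]
      exact dvd_sub (dvd_sub (Dvd.intro_left _ rfl) h12) h21
    exact hQ.pow_dvd_of_dvd_mul_left 2 hg0 hd
  -- step C : Q^2 ∣ h4, contradiction
  apply hnh4
  obtain ⟨m, hmA⟩ := stepA
  have key : Q^2 ∣ g0*(g0*h4) := by
    have heq : g0*(g0*h4) = (g0*Q^2 - g0*(g1*h3)) - g2*(g0*h2) := by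
      linear_combination -g0 * e4
    rw [heq]
    have d1 : Q^2 ∣ g0*Q^2 := Dvd.dvd.mul_left dvd_rfl _
    have d2 : Q^2 ∣ g0*(g1*h3) := by
      apply Dvd.dvd.mul_left
      have hQh3 : Q ∣ h3 := dvd_trans (Dvd.intro _ (by rw [sq])) stepB
      have := mul_dvd_mul dg1 hQh3
      simpa [sq] using this
    have d3 : Q^2 ∣ g2*(g0*h2) := by
      have heq2 : g2*(g0*h2) = g2*(Q^2*m) - g2*(g2*h0) := by
        linear_combination g2 * hmA
      rw [heq2]
      apply dvd_sub
      · exact Dvd.dvd.mul_left (Dvd.intro _ rfl) _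
      · obtain ⟨u, hu⟩ := dg2
        exact ⟨u*(u*h0), by rw [hu]; ring⟩
    exact dvd_sub (dvd_sub d1 d2) d3
  have k1 : Q^2 ∣ g0*h4 := hQ.pow_dvd_of_dvd_mul_left 2 hg0 key
  exact hQ.pow_dvd_of_dvd_mul_left 2 hg0 k1

lemma Fpoly_natDegree (p q : ℕ) (hp : p ≠ 0) (hq : q ≠ 0) :
    (Fpoly p q).natDegree = 6 := by
  unfold Fpoly
  compute_degree!

lemma Fpoly_coeff4 (p q : ℕ) : (Fpoly p q).coeff 4 = (q:ℤ)^2 := by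
  simp only [Fpoly, coeff_add, coeff_C_mul, coeff_X_pow, coeff_C, coeff_X]
  norm_num

lemma Fpoly_coeff0 (p q : ℕ) : (Fpoly p q).coeff 0 = (p:ℤ) := by
  simp [Fpoly, coeff_X_pow]

lemma Fpoly_primitive (p q : ℕ) (hp : p.Prime) (hq : q.Prime) (hpq : p ≠ q) :
    (Fpoly p q).IsPrimitive := by
  intro r hr
  rw [C_dvd_iff_dvd_coeff] at hr
  have h0 := hr 0
  have h4 := hr 4
  rw [Fpoly_coeff0] at h0
  rw [Fpoly_coeff4] at h4
  have hcop : IsCoprime ((p:ℤ)) ((q:ℤ)^2) := by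
    have : Nat.Coprime p (q^2) := ((Nat.coprime_primes hp hq).mpr hpq).pow_right 2
    have := Nat.isCoprime_iff_coprime.mpr this
    push_cast at this
    exact this
  exact hcop.isUnit_of_dvd' h0 h4

theorem Fpoly_irreducible (p q : ℕ) (hp : p.Prime) (hq : q.Prime) (hpq : p ≠ q) :
    Irreducible (Fpoly p q) := by
  have hdeg : (Fpoly p q).natDegree = 6 := Fpoly_natDegree p q hp.pos.ne' hq.pos.ne'
  have hF0 : (Fpoly (p:ℤ) (q:ℤ)) ≠ 0 := by
    intro h0
    rw [h0, natDegree_zero] at hdeg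
    omega
  have hprim := Fpoly_primitive p q hp hq hpq
  rw [irreducible_iff]
  constructor
  · intro hu
    have := natDegree_eq_zero_of_isUnit hu
    omega
  · intro g h hf
    have hg0 : g ≠ 0 := fun h0 => hF0 (by rw [hf, h0, zero_mul])
    have hh0 : h ≠ 0 := fun h0 => hF0 (by rw [hf, h0, mul_zero])
    have hsum : g.natDegree + h.natDegree = 6 := by
      rw [← natDegree_mul hg0 hh0, ← hf, hdeg]
    by_cases hdg : g.natDegree = 0
    · left
      have hgc : g = C (g.coeff 0) := eq_C_of_natDegree_eq_zero hdg
      have hdvd : C (g.coeff 0) ∣ Fpoly p q := ⟨h, by rw [← hgc, hf]⟩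
      rw [hgc]
      exact isUnit_C.mpr (hprim _ hdvd)
    · by_cases hdh : h.natDegree = 0
      · right
        have hhc : h = C (h.coeff 0) := eq_C_of_natDegree_eq_zero hdh
        have hdvd : C (h.coeff 0) ∣ Fpoly p q := ⟨g, by rw [← hhc, hf, mul_comm]⟩
        rw [hhc]
        exact isUnit_C.mpr (hprim _ hdvd)
      · exfalso
        have hf' : Fpoly p q = h * g := by rw [hf, mul_comm]
        have : g.natDegree = 1 ∨ g.natDegree = 2 ∨ g.natDegree = 3 ∨
            g.natDegree = 4 ∨ g.natDegree = 5 := by omega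
        rcases this with h1 | h2 | h3 | h4 | h5
        · exact no_deg_one p q hp hq hpq g h hf h1 (by omega)
        · exact no_deg_two p q hp hq hpq g h hf h2 (by omega)
        · exact no_deg_three p q hp hq hpq g h hf h3 (by omega)
        · exact no_deg_two p q hp hq hpq h g hf' (by omega) (by omega)
        · exact no_deg_one p q hp hq hpq h g hf' (by omega) (by omega)

theorem example_2 (p q : ℕ) (hp : p.Prime) (hq : q.Prime) (hpq : p ≠ q) :
    Irreducible (((C ((p:ℤ)) + C ((p:ℤ) * (q:ℤ)^2) * X + C ((p:ℤ) * (q:ℤ)^2) * X^2 +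
      C ((p:ℤ) * (q:ℤ)^2) * X^3 + C ((q:ℤ)^2) * X^4 +
      C ((p:ℤ) * (q:ℤ)^2) * X^5 + C ((p:ℤ) * (q:ℤ)^2) * X^6)).map (Int.castRingHom ℚ)) := by
  have hprim := Fpoly_primitive p q hp hq hpq
  have hirr := Fpoly_irreducible p q hp hq hpq
  have := (Polynomial.IsPrimitive.Int.irreducible_iff_irreducible_map_cast hprim).mp hirr
  exact this
end

section
/- For distinct primes p and q and any nonnegative integer m, the polynomial f(X) = p^m + q^2 X + p q^2 X^2 + p q^2 X^3 + p q^2 X^4 + p q^2 X^5 + p q^2 X^6 is irreducible over Q. -/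
open Polynomial

private lemma no_linear_factor (p q : ℕ) (hp : p.Prime) (hq : q.Prime) (hpq : p ≠ q) (m : ℕ)
    (g h : ℤ[X])
    (hgh : (C ((p:ℤ)^m) + C ((q:ℤ)^2) * X + C ((p:ℤ) * (q:ℤ)^2) * X^2 +
      C ((p:ℤ) * (q:ℤ)^2) * X^3 + C ((p:ℤ) * (q:ℤ)^2) * X^4 +
      C ((p:ℤ) * (q:ℤ)^2) * X^5 + C ((p:ℤ) * (q:ℤ)^2) * X^6) = g * h)
    (hg1 : g.natDegree = 1) : False := by
  set F : ℤ[X] := C ((p:ℤ)^m) + C ((q:ℤ)^2) * X + C ((p:ℤ) * (q:ℤ)^2) * X^2 +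
      C ((p:ℤ) * (q:ℤ)^2) * X^3 + C ((p:ℤ) * (q:ℤ)^2) * X^4 +
      C ((p:ℤ) * (q:ℤ)^2) * X^5 + C ((p:ℤ) * (q:ℤ)^2) * X^6 with hF
  haveI : Fact q.Prime := ⟨hq⟩
  have hqp : ¬ (q ∣ p) := fun hd => hpq ((Nat.prime_dvd_prime_iff_eq hq hp).mp hd).symm
  -- reduction mod q
  have hpz : ((p:ℤ) : ZMod q) ≠ 0 := by
    rw [Int.cast_natCast, Ne, ZMod.natCast_eq_zero_iff]
    exact hqp
  have hmapq : F.map (Int.castRingHom (ZMod q)) = C (((p:ℤ) : ZMod q)^m) := by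
    have hqq : (((q:ℤ)) : ZMod q) = 0 := by
      rw [Int.cast_natCast, ZMod.natCast_self]
    simp [hF, Polynomial.map_add, Polynomial.map_mul, Polynomial.map_pow, hqq]
  have hFq : F.map (Int.castRingHom (ZMod q)) ≠ 0 := by
    rw [hmapq, Ne, Polynomial.C_eq_zero]
    exact pow_ne_zero m hpz
  have hdeg0 : (g.map (Int.castRingHom (ZMod q))).natDegree = 0 ∧
      (h.map (Int.castRingHom (ZMod q))).natDegree = 0 := by
    have hmul : (g.map (Int.castRingHom (ZMod q))) * (h.map (Int.castRingHom (ZMod q)))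
        = F.map (Int.castRingHom (ZMod q)) := by
      rw [hgh, Polynomial.map_mul]
    have hg0 : (g.map (Int.castRingHom (ZMod q))) ≠ 0 := by
      intro hz; rw [hz, zero_mul] at hmul; exact hFq hmul.symm
    have hh0 : (h.map (Int.castRingHom (ZMod q))) ≠ 0 := by
      intro hz; rw [hz, mul_zero] at hmul; exact hFq hmul.symm
    have : (g.map (Int.castRingHom (ZMod q))).natDegree
        + (h.map (Int.castRingHom (ZMod q))).natDegree = 0 := by
      rw [← Polynomial.natDegree_mul hg0 hh0, hmul, hmapq, natDegree_C]
    omega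
  -- q ∣ g.coeff 1, q ∤ g.coeff 0
  have hqb : (q:ℤ) ∣ g.coeff 1 := by
    have : (g.map (Int.castRingHom (ZMod q))).coeff 1 = 0 :=
      coeff_eq_zero_of_natDegree_lt (by omega)
    rw [coeff_map] at this
    rwa [← ZMod.intCast_zmod_eq_zero_iff_dvd]
  have hqa : ¬ ((q:ℤ) ∣ g.coeff 0) := by
    intro hd
    have h0 : (g.map (Int.castRingHom (ZMod q))).coeff 0 = 0 := by
      rw [coeff_map]
      exact (ZMod.intCast_zmod_eq_zero_iff_dvd _ _).mpr hd
    have hg0 : g.map (Int.castRingHom (ZMod q)) = 0 := by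
      have := Polynomial.eq_C_of_natDegree_eq_zero hdeg0.1
      rw [this, h0, map_zero]
    have hmul : (g.map (Int.castRingHom (ZMod q))) * (h.map (Int.castRingHom (ZMod q)))
        = F.map (Int.castRingHom (ZMod q)) := by
      rw [hgh, Polynomial.map_mul]
    rw [hg0, zero_mul] at hmul
    exact hFq hmul.symm
  -- set a, b
  set a : ℤ := g.coeff 0 with ha
  set b : ℤ := g.coeff 1 with hb
  have hbne : b ≠ 0 := by
    intro h0
    have := Polynomial.eq_X_add_C_of_degree_le_one (p := g) (by rw [degree_eq_natDegree (by intro hz; simp [hz] at hg1), hg1]; exact_mod_cast le_rfl)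
    rw [← hb, ← ha, h0, map_zero, zero_mul, zero_add] at this
    rw [this] at hg1
    simp at hg1
  -- rational root
  have hgeq : g = C b * X + C a :=
    Polynomial.eq_X_add_C_of_degree_le_one (by rw [degree_eq_natDegree (by intro hz; simp [hz] at hg1), hg1]; exact_mod_cast le_rfl)
  set r : ℚ := -(a : ℚ) / (b : ℚ) with hr
  have hbq : (b:ℚ) ≠ 0 := Int.cast_ne_zero.mpr hbne
  have hgr : (g.map (Int.castRingHom ℚ)).eval r = 0 := by
    rw [hgeq]
    push_cast [Polynomial.map_add, Polynomial.map_mul]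
    simp [hr]
    field_simp
    ring
  have hFr : (F.map (Int.castRingHom ℚ)).eval r = 0 := by
    rw [hgh, Polynomial.map_mul, eval_mul, hgr, zero_mul]
  have hFr' : (p:ℚ)^m + (q:ℚ)^2 * r + (p:ℚ)*(q:ℚ)^2 * r^2 + (p:ℚ)*(q:ℚ)^2 * r^3
      + (p:ℚ)*(q:ℚ)^2 * r^4 + (p:ℚ)*(q:ℚ)^2 * r^5 + (p:ℚ)*(q:ℚ)^2 * r^6 = 0 := by
    rw [hF] at hFr
    simp only [Polynomial.map_add, Polynomial.map_mul, Polynomial.map_pow, Polynomial.map_C,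
      Polynomial.map_X, Polynomial.map_natCast, Polynomial.map_intCast, eval_add, eval_mul,
      eval_pow, eval_C, eval_X, eval_natCast, eval_intCast, eq_intCast] at hFr
    push_cast at hFr
    linarith [hFr]
  -- clear denominators: integer equation
  have key : (p:ℤ)^m * b^6 - (q:ℤ)^2 * a * b^5 + (p:ℤ)*(q:ℤ)^2 * a^2 * b^4
      - (p:ℤ)*(q:ℤ)^2 * a^3 * b^3 + (p:ℤ)*(q:ℤ)^2 * a^4 * b^2
      - (p:ℤ)*(q:ℤ)^2 * a^5 * b + (p:ℤ)*(q:ℤ)^2 * a^6 = 0 := by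
    have : ((p:ℤ)^m * b^6 - (q:ℤ)^2 * a * b^5 + (p:ℤ)*(q:ℤ)^2 * a^2 * b^4
      - (p:ℤ)*(q:ℤ)^2 * a^3 * b^3 + (p:ℤ)*(q:ℤ)^2 * a^4 * b^2
      - (p:ℤ)*(q:ℤ)^2 * a^5 * b + (p:ℤ)*(q:ℤ)^2 * a^6 : ℚ) = 0 := by
      have h1 : (b:ℚ) * r = -(a:ℚ) := by rw [hr]; field_simp
      push_cast
      linear_combination ((b:ℚ)^6) * hFr' - ((q:ℚ)^2*(b:ℚ)^5 + (p:ℚ)*(q:ℚ)^2*(b:ℚ)^4*((b:ℚ)*r-(a:ℚ))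
        + (p:ℚ)*(q:ℚ)^2*(b:ℚ)^3*(((b:ℚ)*r)^2-(a:ℚ)*((b:ℚ)*r)+(a:ℚ)^2)
        + (p:ℚ)*(q:ℚ)^2*(b:ℚ)^2*(((b:ℚ)*r)^3-(a:ℚ)*((b:ℚ)*r)^2+(a:ℚ)^2*((b:ℚ)*r)-(a:ℚ)^3)
        + (p:ℚ)*(q:ℚ)^2*(b:ℚ)*(((b:ℚ)*r)^4-(a:ℚ)*((b:ℚ)*r)^3+(a:ℚ)^2*((b:ℚ)*r)^2-(a:ℚ)^3*((b:ℚ)*r)+(a:ℚ)^4)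
        + (p:ℚ)*(q:ℚ)^2*(((b:ℚ)*r)^5-(a:ℚ)*((b:ℚ)*r)^4+(a:ℚ)^2*((b:ℚ)*r)^3-(a:ℚ)^3*((b:ℚ)*r)^2+(a:ℚ)^4*((b:ℚ)*r)-(a:ℚ)^5)) * h1
    exact_mod_cast this
  obtain ⟨c, hc⟩ := hqb
  have hdvd : (q:ℤ) ∣ (p:ℤ) * a^6 := by
    refine ⟨-((p:ℤ)^m * (q:ℤ)^3 * c^6 - (q:ℤ)^4 * a * c^5 + (p:ℤ)*(q:ℤ)^3 * a^2 * c^4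
      - (p:ℤ)*(q:ℤ)^2 * a^3 * c^3 + (p:ℤ)*(q:ℤ) * a^4 * c^2 - (p:ℤ) * a^5 * c), ?_⟩
    have hq2 : ((q:ℤ))^2 ≠ 0 := pow_ne_zero _ (Int.natCast_ne_zero.mpr hq.pos.ne')
    have : ((q:ℤ))^2 * ((p:ℤ) * a^6 - (q:ℤ) * (-((p:ℤ)^m * (q:ℤ)^3 * c^6 - (q:ℤ)^4 * a * c^5
        + (p:ℤ)*(q:ℤ)^3 * a^2 * c^4 - (p:ℤ)*(q:ℤ)^2 * a^3 * c^3 + (p:ℤ)*(q:ℤ) * a^4 * c^2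
        - (p:ℤ) * a^5 * c))) = 0 := by
      rw [hc] at key
      linear_combination key
    have := mul_eq_zero.mp this
    rcases this with h1 | h2
    · exact absurd h1 hq2
    · linarith
  have hqZ : Prime (q:ℤ) := Nat.prime_iff_prime_int.mp hq
  rcases hqZ.dvd_mul.mp hdvd with hd | hd
  · exact hqp (by exact_mod_cast hd)
  · exact hqa (hqZ.dvd_of_dvd_pow hd)

theorem example_3 (p q : ℕ) (hp : p.Prime) (hq : q.Prime) (hpq : p ≠ q) (m : ℕ) :
    Irreducible (((C ((p:ℤ)^m) + C ((q:ℤ)^2) * X + C ((p:ℤ) * (q:ℤ)^2) * X^2 +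
      C ((p:ℤ) * (q:ℤ)^2) * X^3 + C ((p:ℤ) * (q:ℤ)^2) * X^4 +
      C ((p:ℤ) * (q:ℤ)^2) * X^5 + C ((p:ℤ) * (q:ℤ)^2) * X^6)).map (Int.castRingHom ℚ)) := by
  set F : ℤ[X] := C ((p:ℤ)^m) + C ((q:ℤ)^2) * X + C ((p:ℤ) * (q:ℤ)^2) * X^2 +
      C ((p:ℤ) * (q:ℤ)^2) * X^3 + C ((p:ℤ) * (q:ℤ)^2) * X^4 +
      C ((p:ℤ) * (q:ℤ)^2) * X^5 + C ((p:ℤ) * (q:ℤ)^2) * X^6 with hF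
  have hpne : (p:ℤ) ≠ 0 := Int.natCast_ne_zero.mpr hp.pos.ne'
  have hqne : (q:ℤ) ≠ 0 := Int.natCast_ne_zero.mpr hq.pos.ne'
  have hc0 : F.coeff 0 = (p:ℤ)^m := by
    simp only [hF, coeff_add, coeff_C_mul, coeff_X_pow, coeff_X, coeff_C]
    norm_num
  have hc1 : F.coeff 1 = (q:ℤ)^2 := by
    simp only [hF, coeff_add, coeff_C_mul, coeff_X_pow, coeff_X, coeff_C]
    norm_num
  have hc6 : F.coeff 6 = (p:ℤ) * (q:ℤ)^2 := by
    simp only [hF, coeff_add, coeff_C_mul, coeff_X_pow, coeff_X, coeff_C]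
    norm_num
  have hcop : IsCoprime ((p:ℤ)^m) ((q:ℤ)^2) := by
    exact (Nat.isCoprime_iff_coprime.mpr ((Nat.coprime_primes hp hq).mpr hpq)).pow
  have hFprim : F.IsPrimitive := by
    rw [Polynomial.isPrimitive_iff_isUnit_of_C_dvd]
    intro r hr
    rw [Polynomial.C_dvd_iff_dvd_coeff] at hr
    have h0 := hr 0
    have h1 := hr 1
    rw [hc0] at h0
    rw [hc1] at h1
    exact hcop.isUnit_of_dvd' h0 h1
  have hFne : F ≠ 0 := fun hz => by
    rw [hz, coeff_zero] at hc6
    exact (mul_ne_zero hpne (pow_ne_zero 2 hqne)) hc6.symm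
  have hdegF : F.natDegree = 6 := by
    rw [hF]
    compute_degree!
    exact ⟨hp.pos.ne', hq.pos.ne'⟩
  rw [← Polynomial.IsPrimitive.Int.irreducible_iff_irreducible_map_cast hFprim]
  constructor
  · intro hu
    have := Polynomial.natDegree_eq_zero_of_isUnit hu
    omega
  · intro g h hgh
    by_contra hcon
    push_neg at hcon
    obtain ⟨hgu, hhu⟩ := hcon
    have hgne : g ≠ 0 := fun hz => hFne (by rw [hgh, hz, zero_mul])
    have hhne : h ≠ 0 := fun hz => hFne (by rw [hgh, hz, mul_zero])
    have hsum : g.natDegree + h.natDegree = 6 := by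
      rw [← Polynomial.natDegree_mul hgne hhne, ← hgh, hdegF]
    have hdg1 : 1 ≤ g.natDegree := by
      rcases Nat.eq_zero_or_pos g.natDegree with h0 | h1
      · exfalso
        have hgC : g = C (g.coeff 0) := Polynomial.eq_C_of_natDegree_eq_zero h0
        have hdvd : C (g.coeff 0) ∣ F := ⟨h, by rw [← hgC, hgh]⟩
        have := hFprim _ hdvd
        exact hgu (by rw [hgC]; exact isUnit_C.mpr this)
      · exact h1
    have hdh1 : 1 ≤ h.natDegree := by
      rcases Nat.eq_zero_or_pos h.natDegree with h0 | h1
      · exfalso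
        have hhC : h = C (h.coeff 0) := Polynomial.eq_C_of_natDegree_eq_zero h0
        have hdvd : C (h.coeff 0) ∣ F := ⟨g, by rw [← hhC, hgh]; ring⟩
        have := hFprim _ hdvd
        exact hhu (by rw [hhC]; exact isUnit_C.mpr this)
      · exact h1
    -- mod p: some factor has degree 1
    haveI : Fact p.Prime := ⟨hp⟩
    have hone : g.natDegree = 1 ∨ h.natDegree = 1 := by
      by_contra hc
      push_neg at hc
      obtain ⟨hg2, hh2⟩ := hc
      have hg2' : 2 ≤ g.natDegree := by omega
      have hh2' : 2 ≤ h.natDegree := by omega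
      have hqz : ((q:ℤ) : ZMod p) ≠ 0 := by
        rw [Int.cast_natCast, Ne, ZMod.natCast_eq_zero_iff]
        exact fun hd => hpq ((Nat.prime_dvd_prime_iff_eq hp hq).mp hd)
      have hmapp : F.map (Int.castRingHom (ZMod p)) =
          C (((q:ℤ) : ZMod p)^2) * X + C ((((p:ℤ)) : ZMod p)^m) := by
        have hpp : (((p:ℤ)) : ZMod p) = 0 := by
          rw [Int.cast_natCast, ZMod.natCast_self]
        simp [hF, Polynomial.map_add, Polynomial.map_mul, Polynomial.map_pow, hpp]
        ring
      have hdegFp : (F.map (Int.castRingHom (ZMod p))).natDegree = 1 := by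
        rw [hmapp]
        exact Polynomial.natDegree_linear (pow_ne_zero 2 hqz)
      have hmul : (g.map (Int.castRingHom (ZMod p))) * (h.map (Int.castRingHom (ZMod p)))
          = F.map (Int.castRingHom (ZMod p)) := by
        rw [hgh, Polynomial.map_mul]
      have hFpne : F.map (Int.castRingHom (ZMod p)) ≠ 0 := fun hz => by
        rw [hz, natDegree_zero] at hdegFp; omega
      have hgpne : (g.map (Int.castRingHom (ZMod p))) ≠ 0 := fun hz => by
        rw [hz, zero_mul] at hmul; exact hFpne hmul.symm
      have hhpne : (h.map (Int.castRingHom (ZMod p))) ≠ 0 := fun hz => by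
        rw [hz, mul_zero] at hmul; exact hFpne hmul.symm
      have hdsum : (g.map (Int.castRingHom (ZMod p))).natDegree
          + (h.map (Int.castRingHom (ZMod p))).natDegree = 1 := by
        rw [← Polynomial.natDegree_mul hgpne hhpne, hmul, hdegFp]
      have hpg : (p:ℤ) ∣ g.coeff g.natDegree := by
        have : (g.map (Int.castRingHom (ZMod p))).coeff g.natDegree = 0 :=
          coeff_eq_zero_of_natDegree_lt (by omega)
        rw [coeff_map] at this
        rwa [← ZMod.intCast_zmod_eq_zero_iff_dvd]
      have hph : (p:ℤ) ∣ h.coeff h.natDegree := by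
        have : (h.map (Int.castRingHom (ZMod p))).coeff h.natDegree = 0 :=
          coeff_eq_zero_of_natDegree_lt (by omega)
        rw [coeff_map] at this
        rwa [← ZMod.intCast_zmod_eq_zero_iff_dvd]
      have hlead : g.leadingCoeff * h.leadingCoeff = (p:ℤ) * (q:ℤ)^2 := by
        have h2 := Polynomial.coeff_mul_degree_add_degree g h
        rw [← hgh, hsum, hc6] at h2
        exact h2.symm
      have hp2 : (p:ℤ)^2 ∣ (p:ℤ) * (q:ℤ)^2 := by
        rw [← hlead]
        obtain ⟨u, hu⟩ := hpg
        obtain ⟨v, hv⟩ := hph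
        exact ⟨u * v, by rw [Polynomial.leadingCoeff, Polynomial.leadingCoeff, hu, hv]; ring⟩
      have : (p:ℤ) ∣ (q:ℤ)^2 := by
        obtain ⟨w, hw⟩ := hp2
        exact ⟨w, mul_left_cancel₀ hpne (by linear_combination hw)⟩
      have hpZ : Prime (p:ℤ) := Nat.prime_iff_prime_int.mp hp
      have : (p:ℤ) ∣ (q:ℤ) := hpZ.dvd_of_dvd_pow this
      have : p ∣ q := by exact_mod_cast this
      exact hpq ((Nat.prime_dvd_prime_iff_eq hp hq).mp this)
    rcases hone with h1 | h1
    · exact absurd (no_linear_factor p q hp hq hpq m g h (by rw [← hF]; exact hgh) h1) (fun x => x)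
    · exact absurd (no_linear_factor p q hp hq hpq m h g (by rw [← hF, hgh]; ring) h1) (fun x => x)
end

section
/- For distinct primes p and q, the polynomial f(X) = pq + pqX + pqX^2 + qX^3 + pX^4 + pqX^5 + pqX^6 is irreducible over Q. -/
/-
Since `f` is primitive, by Gauss's lemma it suffices to rule out a factorisation `f = g * h`
over `ℤ` into nonconstant factors.
Modulo `p` we get `f ≡ q X³`, so `g` and `h` reduce to monomials whose degrees add up to `3`.
Since `p² ∤ pq`, `p` cannot divide both constant coefficients nor both leading coefficients
of `g` and `h`; hence a nonconstant factorisation must have a factor of degree exactly `3`, so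
both factors have degree `3`. The same argument modulo `q`, where `f ≡ p X⁴`, forces a factor
of degree `4`: a contradiction.
-/

open Polynomial

namespace Polynomial

variable {R K : Type*}

theorem natDegree_eq_zero_of_mul_eq_C_mul_X_pow [Semiring K] [IsDomain K] {g h : K[X]}
    {c : K} {k : ℕ} (hc : c ≠ 0) (hgh : g * h = C c * X ^ k) (hg : g.coeff 0 ≠ 0) :
    g.natDegree = 0 := by
  have hgh0 : g * h ≠ 0 := by
    rw [hgh]; exact mul_ne_zero (C_ne_zero.mpr hc) (pow_ne_zero _ X_ne_zero)
  have htrail := natTrailingDegree_mul (left_ne_zero_of_mul hgh0) (right_ne_zero_of_mul hgh0)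
  have hdeg := natDegree_mul (left_ne_zero_of_mul hgh0) (right_ne_zero_of_mul hgh0)
  rw [hgh, C_mul_X_pow_eq_monomial, natTrailingDegree_monomial hc] at htrail
  rw [hgh, natDegree_C_mul_X_pow k c hc] at hdeg
  have hg_trail : g.natTrailingDegree = 0 := natTrailingDegree_eq_zero.mpr (Or.inr hg)
  have := natTrailingDegree_le_natDegree h
  omega

theorem natDegree_eq_zero_or_eq_of_map_mul_eq_C_mul_X_pow [CommRing R] [NoZeroDivisors R]
    [CommRing K] [IsDomain K] {φ : R →+* K} {g h : R[X]} {c : K} {k : ℕ} (hc : c ≠ 0)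
    (hmap : (g * h).map φ = C c * X ^ k) (h0 : (g * h).coeff 0 ∉ RingHom.ker φ ^ 2)
    (hlead : (g * h).leadingCoeff ∉ RingHom.ker φ ^ 2) :
    g.natDegree = 0 ∨ h.natDegree = 0 ∨ g.natDegree = k ∨ h.natDegree = k := by
  have hφ : g.map φ * h.map φ = C c * X ^ k := by rw [← Polynomial.map_mul, hmap]
  have hφ0 : g.map φ * h.map φ ≠ 0 := by
    rw [hφ]; exact mul_ne_zero (C_ne_zero.mpr hc) (pow_ne_zero _ X_ne_zero)
  have hsum : (g.map φ).natDegree + (h.map φ).natDegree = k := by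
    rw [← natDegree_mul (left_ne_zero_of_mul hφ0) (right_ne_zero_of_mul hφ0), hφ,
      natDegree_C_mul_X_pow k c hc]
  have hconst : φ (g.coeff 0) ≠ 0 ∨ φ (h.coeff 0) ≠ 0 := by
    by_contra! hboth
    exact h0 (by rw [mul_coeff_zero, pow_two]; exact Ideal.mul_mem_mul hboth.1 hboth.2)
  have hlc : (g.map φ).natDegree = g.natDegree ∨ (h.map φ).natDegree = h.natDegree := by
    by_contra! hboth
    refine hlead ?_
    rw [leadingCoeff_mul, pow_two]
    exact Ideal.mul_mem_mul
      (by_contra fun hg => hboth.1 (natDegree_map_of_leadingCoeff_ne_zero φ hg))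
      (by_contra fun hh => hboth.2 (natDegree_map_of_leadingCoeff_ne_zero φ hh))
  have hg_le := natDegree_map_le (f := φ) (p := g)
  have hh_le := natDegree_map_le (f := φ) (p := h)
  rcases hconst with hg | hh
  · have := natDegree_eq_zero_of_mul_eq_C_mul_X_pow hc hφ (by rwa [coeff_map])
    omega
  · have := natDegree_eq_zero_of_mul_eq_C_mul_X_pow (h := g.map φ) hc
      (by rwa [mul_comm] at hφ) (by rwa [coeff_map])
    omega

theorem IsPrimitive.irreducible_of_forall_eq_mul [CommRing R] [NoZeroDivisors R] {f : R[X]}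
    (hf : f.IsPrimitive) (hdeg : 0 < f.natDegree)
    (hfac : ∀ g h : R[X], f = g * h → g.natDegree = 0 ∨ h.natDegree = 0) : Irreducible f := by
  have hunit {g : R[X]} (hg : g ∣ f) (hg0 : g.natDegree = 0) : IsUnit g := by
    rw [eq_C_of_natDegree_eq_zero hg0] at hg ⊢
    exact isUnit_C.mpr (hf _ hg)
  refine ⟨not_isUnit_of_natDegree_pos f hdeg, fun g h hgh => ?_⟩
  exact (hfac g h hgh).imp (hunit (hgh ▸ dvd_mul_right g h)) (hunit (hgh ▸ dvd_mul_left h g))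

theorem natDegree_eq_zero_or_eq_of_map_zmod_mul_eq_C_mul_X_pow {r : ℕ} [Fact r.Prime]
    {g h : ℤ[X]} {c : ZMod r} {k : ℕ} (hc : c ≠ 0)
    (hmap : (g * h).map (Int.castRingHom (ZMod r)) = C c * X ^ k)
    (h0 : ¬ (r : ℤ) ^ 2 ∣ (g * h).coeff 0)
    (hlead : ¬ (r : ℤ) ^ 2 ∣ (g * h).leadingCoeff) :
    g.natDegree = 0 ∨ h.natDegree = 0 ∨ g.natDegree = k ∨ h.natDegree = k := by
  simp only [← Ideal.mem_span_singleton, ← Ideal.span_singleton_pow,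
    ← ZMod.ker_intCastRingHom] at h0 hlead
  exact natDegree_eq_zero_or_eq_of_map_mul_eq_C_mul_X_pow hc hmap h0 hlead

end Polynomial

theorem not_sq_dvd_mul_of_not_dvd {α : Type*} [CommMonoidWithZero α] [IsCancelMulZero α]
    {a b : α} (ha : a ≠ 0) (h : ¬ a ∣ b) : ¬ a ^ 2 ∣ a * b := by
  rwa [sq, mul_dvd_mul_iff_left ha]

noncomputable def pqSextic (p q : ℤ) : ℤ[X] :=
  C (p * q) + C (p * q) * X + C (p * q) * X ^ 2 + C q * X ^ 3 + C p * X ^ 4 +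
    C (p * q) * X ^ 5 + C (p * q) * X ^ 6

section pqSextic

variable {p q : ℤ}

theorem pqSextic_coeff_zero : (pqSextic p q).coeff 0 = p * q := by
  simp only [pqSextic, coeff_add, coeff_C_mul, coeff_X_pow, coeff_C, coeff_X]; norm_num

theorem pqSextic_coeff_three : (pqSextic p q).coeff 3 = q := by
  simp only [pqSextic, coeff_add, coeff_C_mul, coeff_X_pow, coeff_C, coeff_X]; norm_num

theorem pqSextic_coeff_four : (pqSextic p q).coeff 4 = p := by
  simp only [pqSextic, coeff_add, coeff_C_mul, coeff_X_pow, coeff_C, coeff_X]; norm_num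

theorem pqSextic_natDegree (hp : p ≠ 0) (hq : q ≠ 0) : (pqSextic p q).natDegree = 6 := by
  unfold pqSextic; compute_degree!

theorem pqSextic_leadingCoeff (hp : p ≠ 0) (hq : q ≠ 0) :
    (pqSextic p q).leadingCoeff = p * q := by
  rw [leadingCoeff, pqSextic_natDegree hp hq]
  simp only [pqSextic, coeff_add, coeff_C_mul, coeff_X_pow, coeff_C, coeff_X]; norm_num

theorem pqSextic_isPrimitive (h : IsCoprime p q) : (pqSextic p q).IsPrimitive := by
  intro r hr
  rw [C_dvd_iff_dvd_coeff] at hr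
  exact h.isUnit_of_dvd' (pqSextic_coeff_four (p := p) (q := q) ▸ hr 4)
    (pqSextic_coeff_three (p := p) (q := q) ▸ hr 3)

theorem map_pqSextic_of_map_left_eq_zero {S : Type*} [CommRing S] {φ : ℤ →+* S}
    (hp : φ p = 0) :
    (pqSextic p q).map φ = C (φ q) * X ^ 3 := by
  simp only [pqSextic, Polynomial.map_add, Polynomial.map_mul, Polynomial.map_pow, map_C, map_X,
    map_mul, hp, C_0, zero_mul, zero_add, add_zero]

theorem map_pqSextic_of_map_right_eq_zero {S : Type*} [CommRing S] {φ : ℤ →+* S}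
    (hq : φ q = 0) :
    (pqSextic p q).map φ = C (φ p) * X ^ 4 := by
  simp only [pqSextic, Polynomial.map_add, Polynomial.map_mul, Polynomial.map_pow, map_C, map_X,
    map_mul, hq, C_0, zero_mul, mul_zero, zero_add, add_zero]

end pqSextic

theorem example_7 (p q : ℕ) (hp : p.Prime) (hq : q.Prime) (hpq : p ≠ q) :
    Irreducible (((C ((p:ℤ) * (q:ℤ)) + C ((p:ℤ) * (q:ℤ)) * X + C ((p:ℤ) * (q:ℤ)) * X^2 +
      C ((q:ℤ)) * X^3 + C ((p:ℤ)) * X^4 +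
      C ((p:ℤ) * (q:ℤ)) * X^5 + C ((p:ℤ) * (q:ℤ)) * X^6)).map (Int.castRingHom ℚ)) := by
  have := Fact.mk hp
  have := Fact.mk hq
  have hp0 : (p : ℤ) ≠ 0 := by exact_mod_cast hp.ne_zero
  have hq0 : (q : ℤ) ≠ 0 := by exact_mod_cast hq.ne_zero
  have hp_ndvd : ¬ p ∣ q := (Nat.prime_dvd_prime_iff_eq hp hq).not.mpr hpq
  have hq_ndvd : ¬ q ∣ p := (Nat.prime_dvd_prime_iff_eq hq hp).not.mpr hpq.symm
  have hnp : ¬ (p : ℤ) ^ 2 ∣ p * q := not_sq_dvd_mul_of_not_dvd hp0 (by exact_mod_cast hp_ndvd)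
  have hnq : ¬ (q : ℤ) ^ 2 ∣ p * q :=
    mul_comm (q : ℤ) p ▸ not_sq_dvd_mul_of_not_dvd hq0 (by exact_mod_cast hq_ndvd)
  have hprim := pqSextic_isPrimitive
    (Nat.isCoprime_iff_coprime.mpr ((Nat.coprime_primes hp hq).mpr hpq))
  change Irreducible ((pqSextic p q).map (Int.castRingHom ℚ))
  rw [← IsPrimitive.Int.irreducible_iff_irreducible_map_cast hprim]
  refine hprim.irreducible_of_forall_eq_mul (by rw [pqSextic_natDegree hp0 hq0]; norm_num)
    fun g h hgh => ?_
  have hgh0 : g * h ≠ 0 := hgh ▸ hprim.ne_zero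
  have hsum : g.natDegree + h.natDegree = 6 := by
    rw [← natDegree_mul (left_ne_zero_of_mul hgh0) (right_ne_zero_of_mul hgh0), ← hgh,
      pqSextic_natDegree hp0 hq0]
  have hmodp := natDegree_eq_zero_or_eq_of_map_zmod_mul_eq_C_mul_X_pow (k := 3)
    (by simpa [ZMod.natCast_eq_zero_iff] using hp_ndvd)
    (hgh ▸ map_pqSextic_of_map_left_eq_zero (by simp))
    (by rwa [← hgh, pqSextic_coeff_zero]) (by rwa [← hgh, pqSextic_leadingCoeff hp0 hq0])
  have hmodq := natDegree_eq_zero_or_eq_of_map_zmod_mul_eq_C_mul_X_pow (k := 4)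
    (by simpa [ZMod.natCast_eq_zero_iff] using hq_ndvd)
    (hgh ▸ map_pqSextic_of_map_right_eq_zero (by simp))
    (by rwa [← hgh, pqSextic_coeff_zero]) (by rwa [← hgh, pqSextic_leadingCoeff hp0 hq0])
  omega
end

section
/- For distinct primes p and q, the polynomial f(X) = q + qX + qX^2 + pX^3 + pqX^4 + pqX^5 + pqX^6 is irreducible over Q. -/
open Polynomial

noncomputable def exF (p q : ℕ) : ℤ[X] :=
  C ((q:ℤ)) + C ((q:ℤ)) * X + C ((q:ℤ)) * X^2 +
    C ((p:ℤ)) * X^3 + C ((p:ℤ) * (q:ℤ)) * X^4 +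
    C ((p:ℤ) * (q:ℤ)) * X^5 + C ((p:ℤ) * (q:ℤ)) * X^6

lemma exF_coeff0 (p q : ℕ) : (exF p q).coeff 0 = (q:ℤ) := by
  simp only [exF, coeff_add, coeff_C_mul, coeff_X_pow, coeff_C, coeff_X]
  norm_num

lemma exF_coeff3 (p q : ℕ) : (exF p q).coeff 3 = (p:ℤ) := by
  simp only [exF, coeff_add, coeff_C_mul, coeff_X_pow, coeff_C, coeff_X]
  norm_num

lemma exF_coeff6 (p q : ℕ) : (exF p q).coeff 6 = (p:ℤ) * (q:ℤ) := by
  simp only [exF, coeff_add, coeff_C_mul, coeff_X_pow, coeff_C, coeff_X]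
  norm_num

lemma exF_natDegree (p q : ℕ) (hp : p ≠ 0) (hq : q ≠ 0) : (exF p q).natDegree = 6 := by
  unfold exF
  compute_degree!


lemma exF_map_q (p q : ℕ) : (exF p q).map (Int.castRingHom (ZMod q)) =
    C ((p : ZMod q)) * X^3 := by
  have hq : ((q:ℤ) : ZMod q) = 0 := by
    push_cast; exact ZMod.natCast_self q
  simp [exF, Polynomial.map_add, Polynomial.map_mul, Polynomial.map_pow, map_C, map_X, hq]

lemma exF_map_p (p q : ℕ) : (exF p q).map (Int.castRingHom (ZMod p)) =
    C ((q : ZMod p)) + C ((q : ZMod p)) * X + C ((q : ZMod p)) * X^2 := by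
  have hp : ((p:ℤ) : ZMod p) = 0 := by
    push_cast; exact ZMod.natCast_self p
  simp [exF, Polynomial.map_add, Polynomial.map_mul, Polynomial.map_pow, map_C, map_X, hp]

lemma exF_key (p q : ℕ) (hp : p.Prime) (hq : q.Prime) (hpq : p ≠ q) (g h : ℤ[X])
    (hgh : exF p q = g * h) (hg1 : 1 ≤ g.natDegree) (hh1 : 1 ≤ h.natDegree)
    (hh0 : ¬ (q:ℤ) ∣ h.coeff 0) : False := by
  haveI := Fact.mk hp
  haveI := Fact.mk hq
  have hqp : ¬ (q:ℤ) ∣ (p:ℤ) := by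
    rw [Int.natCast_dvd_natCast]
    exact fun hd => hpq ((Nat.prime_dvd_prime_iff_eq hq hp).mp hd).symm
  have hpq' : ¬ (p:ℤ) ∣ (q:ℤ) := by
    rw [Int.natCast_dvd_natCast]
    exact fun hd => hpq ((Nat.prime_dvd_prime_iff_eq hp hq).mp hd)
  have hqz : (q:ℤ) ≠ 0 := by exact_mod_cast hq.ne_zero
  have hpz : (p:ℤ) ≠ 0 := by exact_mod_cast hp.ne_zero
  have hF0 : exF p q ≠ 0 := fun h0 => by
    have := exF_coeff0 p q
    rw [h0, coeff_zero] at this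
    exact hqz this.symm
  have hg0 : g ≠ 0 := fun h0 => hF0 (by rw [hgh, h0, zero_mul])
  have hh00 : h ≠ 0 := fun h0 => hF0 (by rw [hgh, h0, mul_zero])
  have dsum : g.natDegree + h.natDegree = 6 := by
    rw [← natDegree_mul hg0 hh00, ← hgh, exF_natDegree p q hp.ne_zero hq.ne_zero]
  have hlead : g.coeff g.natDegree * h.coeff h.natDegree = (p:ℤ) * (q:ℤ) := by
    have h1 : (exF p q).leadingCoeff = (p:ℤ) * (q:ℤ) := by
      rw [leadingCoeff, exF_natDegree p q hp.ne_zero hq.ne_zero, exF_coeff6]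
    rw [hgh, leadingCoeff_mul] at h1
    simp only [leadingCoeff] at h1
    exact h1
  have c0 : g.coeff 0 * h.coeff 0 = (q:ℤ) := by
    rw [← mul_coeff_zero, ← hgh, exF_coeff0]
  -- mod q analysis
  set φ := Int.castRingHom (ZMod q) with hφ
  have hpZ : ((p : ZMod q)) ≠ 0 := by
    rw [Ne, ZMod.natCast_eq_zero_iff]
    exact fun hd => hpq ((Nat.prime_dvd_prime_iff_eq hq hp).mp hd).symm
  have hmap : g.map φ * h.map φ = C ((p : ZMod q)) * X^3 := by
    rw [← Polynomial.map_mul, ← hgh, exF_map_q]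
  have hH0c : (h.map φ).coeff 0 ≠ 0 := by
    rw [coeff_map]
    intro he
    exact hh0 ((ZMod.intCast_zmod_eq_zero_iff_dvd _ _).mp he)
  have hH0 : h.map φ ≠ 0 := fun he => hH0c (by rw [he, coeff_zero])
  have hrhs : C ((p : ZMod q)) * X^3 ≠ 0 :=
    mul_ne_zero (C_ne_zero.mpr hpZ) (pow_ne_zero _ X_ne_zero)
  have hG0 : g.map φ ≠ 0 := fun he => hrhs (by rw [← hmap, he, zero_mul])
  have hdeg : (g.map φ).natDegree + (h.map φ).natDegree = 3 := by
    rw [← natDegree_mul hG0 hH0, hmap, natDegree_C_mul_X_pow _ _ hpZ]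
  have htr : (g.map φ).natTrailingDegree + (h.map φ).natTrailingDegree = 3 := by
    rw [← natTrailingDegree_mul hG0 hH0, hmap, C_mul_X_pow_eq_monomial,
      natTrailingDegree_monomial hpZ]
  have htH : (h.map φ).natTrailingDegree = 0 :=
    natTrailingDegree_eq_zero.mpr (Or.inr hH0c)
  have htG : (g.map φ).natTrailingDegree = 3 := by omega
  have hGle : (g.map φ).natTrailingDegree ≤ (g.map φ).natDegree :=
    natTrailingDegree_le_natDegree _
  have hGdeg : (g.map φ).natDegree = 3 := by omega
  have hHdeg : (h.map φ).natDegree = 0 := by omega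
  have h3g : 3 ≤ g.natDegree := le_trans (le_of_eq hGdeg.symm) natDegree_map_le
  have hqlh : (q:ℤ) ∣ h.coeff h.natDegree := by
    have : (h.map φ).coeff h.natDegree = 0 :=
      coeff_eq_zero_of_natDegree_lt (by omega)
    rw [coeff_map] at this
    exact (ZMod.intCast_zmod_eq_zero_iff_dvd _ _).mp this
  have hdg : g.natDegree = 3 := by
    by_contra hne
    have h4 : 4 ≤ g.natDegree := by omega
    have hqlg : (q:ℤ) ∣ g.coeff g.natDegree := by
      have : (g.map φ).coeff g.natDegree = 0 :=
        coeff_eq_zero_of_natDegree_lt (by omega)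
      rw [coeff_map] at this
      exact (ZMod.intCast_zmod_eq_zero_iff_dvd _ _).mp this
    have hdd : (q:ℤ) * (q:ℤ) ∣ g.coeff g.natDegree * h.coeff h.natDegree :=
      mul_dvd_mul hqlg hqlh
    rw [hlead] at hdd
    exact hqp ((mul_dvd_mul_iff_right hqz).mp hdd)
  have hdh : h.natDegree = 3 := by omega
  -- mod p analysis
  set ψ := Int.castRingHom (ZMod p) with hψ
  have hqZ : ((q : ZMod p)) ≠ 0 := by
    rw [Ne, ZMod.natCast_eq_zero_iff]
    exact fun hd => hpq ((Nat.prime_dvd_prime_iff_eq hp hq).mp hd)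
  have hmapp : g.map ψ * h.map ψ =
      C ((q : ZMod p)) + C ((q : ZMod p)) * X + C ((q : ZMod p)) * X^2 := by
    rw [← Polynomial.map_mul, ← hgh, exF_map_p]
  have hrdeg : (C ((q : ZMod p)) + C ((q : ZMod p)) * X + C ((q : ZMod p)) * X^2).natDegree
      = 2 := by compute_degree!
  have hpg0 : ¬ (p:ℤ) ∣ g.coeff 0 := fun hd => hpq' (c0 ▸ hd.mul_right _)
  have hph0 : ¬ (p:ℤ) ∣ h.coeff 0 := fun hd => hpq' (c0 ▸ hd.mul_left _)
  have hP0 : g.map ψ ≠ 0 := fun he => by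
    have : (g.map ψ).coeff 0 = 0 := by rw [he, coeff_zero]
    rw [coeff_map] at this
    exact hpg0 ((ZMod.intCast_zmod_eq_zero_iff_dvd _ _).mp this)
  have hQ0 : h.map ψ ≠ 0 := fun he => by
    have : (h.map ψ).coeff 0 = 0 := by rw [he, coeff_zero]
    rw [coeff_map] at this
    exact hph0 ((ZMod.intCast_zmod_eq_zero_iff_dvd _ _).mp this)
  have hdeg2 : (g.map ψ).natDegree + (h.map ψ).natDegree = 2 := by
    rw [← natDegree_mul hP0 hQ0, hmapp, hrdeg]
  have hplg : (p:ℤ) ∣ g.coeff 3 := by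
    have : (g.map ψ).coeff 3 = 0 := coeff_eq_zero_of_natDegree_lt (by omega)
    rw [coeff_map] at this
    exact (ZMod.intCast_zmod_eq_zero_iff_dvd _ _).mp this
  have hplh : (p:ℤ) ∣ h.coeff 3 := by
    have : (h.map ψ).coeff 3 = 0 := coeff_eq_zero_of_natDegree_lt (by omega)
    rw [coeff_map] at this
    exact (ZMod.intCast_zmod_eq_zero_iff_dvd _ _).mp this
  rw [hdg, hdh] at hlead
  have hdd2 : (p:ℤ) * (p:ℤ) ∣ g.coeff 3 * h.coeff 3 := mul_dvd_mul hplg hplh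
  rw [hlead] at hdd2
  exact hpq' ((mul_dvd_mul_iff_left hpz).mp hdd2)

theorem example_8 (p q : ℕ) (hp : p.Prime) (hq : q.Prime) (hpq : p ≠ q) :
    Irreducible (((C ((q:ℤ)) + C ((q:ℤ)) * X + C ((q:ℤ)) * X^2 +
      C ((p:ℤ)) * X^3 + C ((p:ℤ) * (q:ℤ)) * X^4 +
      C ((p:ℤ) * (q:ℤ)) * X^5 + C ((p:ℤ) * (q:ℤ)) * X^6)).map (Int.castRingHom ℚ)) := by
  show Irreducible ((exF p q).map (Int.castRingHom ℚ))
  have hcop : IsCoprime (p:ℤ) (q:ℤ) := by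
    rw [Nat.isCoprime_iff_coprime]
    exact (Nat.coprime_primes hp hq).mpr hpq
  have hprim : (exF p q).IsPrimitive := by
    intro r hr
    have hd := (C_dvd_iff_dvd_coeff r _).mp hr
    have h3 := hd 3
    have h0 := hd 0
    rw [exF_coeff3] at h3
    rw [exF_coeff0] at h0
    exact hcop.isUnit_of_dvd' h3 h0
  rw [← IsPrimitive.Int.irreducible_iff_irreducible_map_cast hprim]
  have hqz : (q:ℤ) ≠ 0 := by exact_mod_cast hq.ne_zero
  constructor
  · exact not_isUnit_of_natDegree_pos _
      (by rw [exF_natDegree p q hp.ne_zero hq.ne_zero]; norm_num)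
  · intro g h hgh
    by_cases hg : g.natDegree = 0
    · left
      have : g = C (g.coeff 0) := (eq_C_of_natDegree_eq_zero hg)
      rw [this, isUnit_C]
      exact hprim _ (this ▸ Dvd.intro _ hgh.symm)
    · by_cases hh : h.natDegree = 0
      · right
        have : h = C (h.coeff 0) := (eq_C_of_natDegree_eq_zero hh)
        rw [this, isUnit_C]
        exact hprim _ (this ▸ Dvd.intro_left _ hgh.symm)
      · exfalso
        have c0 : g.coeff 0 * h.coeff 0 = (q:ℤ) := by
          rw [← mul_coeff_zero, ← hgh, exF_coeff0]
        by_cases hqh : (q:ℤ) ∣ h.coeff 0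
        · have hqg : ¬ (q:ℤ) ∣ g.coeff 0 := by
            intro hqg
            have hdd : (q:ℤ) * (q:ℤ) ∣ g.coeff 0 * h.coeff 0 := mul_dvd_mul hqg hqh
            rw [c0] at hdd
            rcases hdd with ⟨c, hc⟩
            have h1 : (1:ℤ) = (q:ℤ) * c :=
              mul_left_cancel₀ hqz (by linear_combination hc)
            have h2 : (q:ℤ) ≤ 1 := Int.le_of_dvd one_pos ⟨c, h1⟩
            have h3 : 2 ≤ q := hq.two_le
            omega
          exact exF_key p q hp hq hpq h g (hgh.trans (mul_comm g h))
            (by omega) (by omega) hqg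
        · exact exF_key p q hp hq hpq g h hgh (by omega) (by omega) hqh
end

section
/- Let f(X) = a_0 + a_1 X + ... + a_n X^n ∈ Z[X] with a_0 a_n ≠ 0, let k ≥ 2, and let p_1, ..., p_k be pairwise distinct primes. Assume for each i = 1, ..., k that n · ν_{p_i}(a_j) ≥ (n − j) · ν_{p_i}(a_0) + j · ν_{p_i}(a_n) for j = 1, ..., n-1, where exactly one of ν_{p_i}(a_0) and ν_{p_i}(a_n) is zero, and denote the nonzero one by α_i. If gcd(gcd(α_1, n), ..., gcd(α_k, n)) = 1, then f is irreducible over Q. -/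
/-!
Fix `p = p_i` and put `s = ν_p(a_n) - ν_p(a_0)`, so that `|s| = α_i`. The hypothesis says that the
Newton polygon of `f` at `p` is the single segment of slope `s / n`; equivalently, the Gauss norm
of `f` for the `p`-adic absolute value at radius `c = p ^ (s / n)` is attained both by the constant
term and by the leading term. The Gauss norm is multiplicative, so the same holds for every factor
`g` of `f` over `ℚ`: `|g_0|_p = |lc g|_p * c ^ deg g`. Comparing exponents, `deg g * s / n` is an
integer, i.e. `n ∣ deg g * α_i` for every `i`, and the gcd condition gives `n ∣ deg g`.
-/

open Polynomial Finset

namespace Polynomial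

variable {R : Type*} [CommRing R]

/-- For `v` the `p`-adic absolute value and `c = p ^ s`, this says that the Newton polygon of `f`
is the single segment of slope `s` between its endpoints. -/
def IsPure (v : AbsoluteValue R ℝ) (c : ℝ) (f : R[X]) : Prop :=
  f.gaussNorm v c = v (f.coeff 0) ∧ f.gaussNorm v c = v f.leadingCoeff * c ^ f.natDegree

variable {v : AbsoluteValue R ℝ} {c : ℝ}

lemma isPure_of_forall_le {f : R[X]} (hc : 0 ≤ c)
    (hle : ∀ i, v (f.coeff i) * c ^ i ≤ v (f.coeff 0))
    (hlead : v f.leadingCoeff * c ^ f.natDegree = v (f.coeff 0)) : IsPure v c f := by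
  have hnorm : f.gaussNorm v c = v (f.coeff 0) := by
    obtain ⟨i, hi⟩ := f.exists_eq_gaussNorm v c
    refine le_antisymm (hi ▸ hle i) ?_
    simpa using f.le_gaussNorm v hc 0
  exact ⟨hnorm, hnorm.trans hlead.symm⟩

/-- Both end terms of a factor are bounded by its Gauss norm, and the products of these bounds
are equalities for `g * h` by multiplicativity, so each bound is an equality. -/
lemma IsPure.of_mul_left [IsDomain R] (hna : IsNonarchimedean v) (hc : 0 < c) {g h : R[X]}
    (h0 : (g * h).coeff 0 ≠ 0) (hgh : IsPure v c (g * h)) : IsPure v c g := by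
  rw [mul_coeff_zero] at h0
  have hg : g ≠ 0 := by rintro rfl; simp at h0
  have hh : h ≠ 0 := by rintro rfl; simp at h0
  have hmul := gaussNorm_mul hna hc g h
  have hle0 (f : R[X]) : v (f.coeff 0) ≤ f.gaussNorm v c := by
    simpa using f.le_gaussNorm v hc.le 0
  have hleLead (f : R[X]) : v f.leadingCoeff * c ^ f.natDegree ≤ f.gaussNorm v c :=
    f.le_gaussNorm v hc.le _
  refine ⟨?_, ?_⟩
  · refine ((mul_eq_mul_iff_eq_and_eq_of_pos (hle0 g) (hle0 h) ?_ ?_).1 ?_).1.symm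
    · exact v.pos (left_ne_zero_of_mul h0)
    · exact (v.pos (right_ne_zero_of_mul h0)).trans_le (hle0 h)
    · rw [← map_mul, ← mul_coeff_zero, ← hmul, hgh.1]
  · refine ((mul_eq_mul_iff_eq_and_eq_of_pos (hleLead g) (hleLead h) ?_ ?_).1 ?_).1.symm
    · exact mul_pos (v.pos (leadingCoeff_ne_zero.2 hg)) (pow_pos hc _)
    · exact (mul_pos (v.pos (leadingCoeff_ne_zero.2 hh)) (pow_pos hc _)).trans_le (hleLead h)
    · rw [← hmul, hgh.2, leadingCoeff_mul, natDegree_mul hg hh, map_mul, pow_add]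
      ring

lemma irreducible_of_natDegree_dvd {K : Type*} [Field K] {f : K[X]} (hf : 0 < f.natDegree)
    (hdvd : ∀ g h : K[X], f = g * h → f.natDegree ∣ g.natDegree) : Irreducible f := by
  refine ⟨fun hu => hf.ne' (natDegree_eq_zero_of_isUnit hu), fun g h hgh => ?_⟩
  have hg : g ≠ 0 := by rintro rfl; simp [hgh] at hf
  have hh : h ≠ 0 := by rintro rfl; simp [hgh] at hf
  have hdeg : f.natDegree = g.natDegree + h.natDegree := by rw [hgh, natDegree_mul hg hh]
  simp only [isUnit_iff_degree_eq_zero, degree_eq_natDegree hg, degree_eq_natDegree hh,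
    Nat.cast_eq_zero]
  rcases Nat.eq_zero_or_pos g.natDegree with hg0 | hgpos
  · exact Or.inl hg0
  · have := Nat.le_of_dvd hgpos (hdvd g h hgh)
    omega

end Polynomial

lemma Nat.dvd_of_forall_dvd_mul_of_gcd_eq_one {ι : Type*} {s : Finset ι} {α : ι → ℕ} {n d : ℕ}
    (hdvd : ∀ i ∈ s, n ∣ d * α i) (hgcd : s.gcd (fun i => Nat.gcd (α i) n) = 1) : n ∣ d := by
  have hdvd_gcd : n ∣ s.gcd (fun i => d * Nat.gcd (α i) n) := by
    refine Finset.dvd_gcd fun i hi => ?_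
    rw [← Nat.gcd_mul_left]
    exact Nat.dvd_gcd (hdvd i hi) (dvd_mul_left n d)
  rwa [Finset.gcd_mul_left, normalize_eq, hgcd, mul_one] at hdvd_gcd

namespace Rat.AbsoluteValue

variable {p : ℕ} [Fact p.Prime]

lemma isNonarchimedean_padic : IsNonarchimedean (padic p) := fun x y => by
  simpa using (Rat.cast_le (K := ℝ)).2 (padicNorm.nonarchimedean (p := p))

lemma padic_eq_rpow {x : ℚ} (hx : x ≠ 0) : padic p x = (p : ℝ) ^ (-(padicValRat p x : ℝ)) := by
  rw [← Int.cast_neg, Real.rpow_intCast]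
  simp [padicNorm.eq_zpow_of_nonzero hx]

lemma one_lt_prime_cast : 1 < (p : ℝ) := by exact_mod_cast (Fact.out : p.Prime).one_lt

lemma prime_cast_pos : 0 < (p : ℝ) := zero_lt_one.trans one_lt_prime_cast

lemma isPure_padic_of_forall_le {F : ℚ[X]} (hF0 : F.coeff 0 ≠ 0) (hF : 0 < F.natDegree)
    (hline : ∀ j, 0 < j → j < F.natDegree → F.coeff j ≠ 0 →
      (F.natDegree - j : ℤ) * padicValRat p (F.coeff 0) + j * padicValRat p F.leadingCoeff ≤
        F.natDegree * padicValRat p (F.coeff j)) :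
    IsPure (padic p) ((p : ℝ) ^
      (((padicValRat p F.leadingCoeff - padicValRat p (F.coeff 0) : ℤ) : ℝ) / F.natDegree)) F := by
  set n := F.natDegree
  set v0 := padicValRat p (F.coeff 0)
  set s := padicValRat p F.leadingCoeff - v0
  have hn : (0 : ℝ) < n := by exact_mod_cast hF
  have hpow (j : ℕ) : ((p : ℝ) ^ ((s : ℝ) / n)) ^ j = (p : ℝ) ^ ((s : ℝ) / n * j) := by
    rw [← Real.rpow_natCast, ← Real.rpow_mul prime_cast_pos.le]
  have hlead : padic p F.leadingCoeff * ((p : ℝ) ^ ((s : ℝ) / n)) ^ n = padic p (F.coeff 0) := by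
    rw [hpow, padic_eq_rpow (leadingCoeff_ne_zero.2 fun h => by simp [h] at hF0),
      padic_eq_rpow hF0, ← Real.rpow_add prime_cast_pos]
    congr 1
    field_simp
    push_cast [s]
    ring
  refine isPure_of_forall_le (by positivity) (fun j => ?_) hlead
  by_cases hj : F.coeff j = 0
  · simp [hj, padicNorm.nonneg]
  rcases Nat.eq_zero_or_pos j with rfl | hj0
  · simp
  rcases (le_natDegree_of_ne_zero hj).eq_or_lt with rfl | hjn
  · exact hlead.le
  have key : ((n - j) * v0 + j * padicValRat p F.leadingCoeff : ℝ) ≤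
      n * padicValRat p (F.coeff j) := by exact_mod_cast hline j hj0 hjn hj
  rw [hpow, padic_eq_rpow hj, padic_eq_rpow hF0, ← Real.rpow_add prime_cast_pos,
    Real.rpow_le_rpow_left_iff one_lt_prime_cast]
  calc -(padicValRat p (F.coeff j) : ℝ) + s / n * j
      = (-(n * padicValRat p (F.coeff j)) + s * j) / n := by field_simp
    _ ≤ (-(n * v0)) / n := by gcongr; push_cast [s]; linarith
    _ = -v0 := by field_simp

lemma dvd_natDegree_mul_of_isPure_padic {G : ℚ[X]} {s : ℤ} {n : ℕ} (hn : n ≠ 0)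
    (hG0 : G.coeff 0 ≠ 0) (hG : IsPure (padic p) ((p : ℝ) ^ ((s : ℝ) / n)) G) :
    (n : ℤ) ∣ G.natDegree * s := by
  have hends := hG.1.symm.trans hG.2
  rw [padic_eq_rpow hG0, padic_eq_rpow (leadingCoeff_ne_zero.2 fun h => by simp [h] at hG0),
    ← Real.rpow_natCast, ← Real.rpow_mul prime_cast_pos.le, ← Real.rpow_add prime_cast_pos,
    Real.rpow_right_inj prime_cast_pos one_lt_prime_cast.ne'] at hends
  refine ⟨padicValRat p G.leadingCoeff - padicValRat p (G.coeff 0), ?_⟩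
  have hn' : (n : ℝ) ≠ 0 := by exact_mod_cast hn
  have : (G.natDegree * s : ℝ) =
      n * (padicValRat p G.leadingCoeff - padicValRat p (G.coeff 0)) := by
    field_simp at hends
    linarith
  exact_mod_cast this

lemma natDegree_dvd_natDegree_mul_of_eq_mul {F G H : ℚ[X]} (hGH : F = G * H)
    (hF0 : F.coeff 0 ≠ 0) (hF : 0 < F.natDegree)
    (hline : ∀ j, 0 < j → j < F.natDegree → F.coeff j ≠ 0 →
      (F.natDegree - j : ℤ) * padicValRat p (F.coeff 0) + j * padicValRat p F.leadingCoeff ≤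
        F.natDegree * padicValRat p (F.coeff j)) :
    (F.natDegree : ℤ) ∣
      G.natDegree * (padicValRat p F.leadingCoeff - padicValRat p (F.coeff 0)) := by
  have hpure := isPure_padic_of_forall_le hF0 hF hline
  subst hGH
  exact dvd_natDegree_mul_of_isPure_padic hF.ne' (left_ne_zero_of_mul (mul_coeff_zero G H ▸ hF0))
    (hpure.of_mul_left isNonarchimedean_padic (Real.rpow_pos_of_pos prime_cast_pos _) hF0)

end Rat.AbsoluteValue

theorem theorem_1_1_general (n : ℕ) (hn : 1 ≤ n) (a : ℕ → ℤ)
    (ha0 : a 0 ≠ 0) (han : a n ≠ 0)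
    (k : ℕ) (p : Fin k → ℕ) (hp : ∀ i, (p i).Prime)
    (α : Fin k → ℕ)
    (hα : ∀ i, (padicValInt (p i) (a 0) = 0 ∧ padicValInt (p i) (a n) = α i ∧ α i ≠ 0) ∨
               (padicValInt (p i) (a n) = 0 ∧ padicValInt (p i) (a 0) = α i ∧ α i ≠ 0))
    (hineq : ∀ i, ∀ j, 1 ≤ j → j ≤ n - 1 →
      n * padicValInt (p i) (a j) ≥
        (n - j) * padicValInt (p i) (a 0) + j * padicValInt (p i) (a n))
    (hgcd : Finset.univ.gcd (fun i => Nat.gcd (α i) n) = 1) :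
    Irreducible ((∑ i ∈ range (n+1), C (a i) * X ^ i).map (Int.castRingHom ℚ)) := by
  set F := (∑ i ∈ range (n+1), C (a i) * X ^ i).map (Int.castRingHom ℚ)
  have hcoeff (j : ℕ) : F.coeff j = if j ≤ n then (a j : ℚ) else 0 := by simp [F, coeff_map]
  have hdeg : F.natDegree = n := natDegree_eq_of_le_of_coeff_ne_zero
    (natDegree_le_iff_coeff_eq_zero.2 fun j hj => by simp [hcoeff]; omega) (by simp [hcoeff, han])
  have hF0 : F.coeff 0 ≠ 0 := by simp [hcoeff, ha0]
  have hlead : F.leadingCoeff = F.coeff n := congrArg F.coeff hdeg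
  have hval (i : Fin k) (j : ℕ) (hj : j ≤ n) :
      padicValRat (p i) (F.coeff j) = padicValInt (p i) (a j) := by
    simp [hcoeff, hj, padicValRat.of_int]
  refine irreducible_of_natDegree_dvd (hdeg ▸ hn) fun G H hGH => hdeg ▸ ?_
  refine Nat.dvd_of_forall_dvd_mul_of_gcd_eq_one (fun i _ => ?_) hgcd
  have : Fact (p i).Prime := ⟨hp i⟩
  have hdvd := Rat.AbsoluteValue.natDegree_dvd_natDegree_mul_of_eq_mul hGH hF0 (hdeg ▸ hn)
    fun j hj0 hjn _ => by
      rw [hdeg] at hjn ⊢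
      rw [hlead, hval i j hjn.le, hval i 0 (Nat.zero_le _), hval i n le_rfl]
      have := hineq i j hj0 (by omega)
      zify [hjn.le] at this
      linarith
  rw [Int.natCast_dvd, Int.natAbs_mul, Int.natAbs_natCast, hdeg, hlead, hval i n le_rfl,
    hval i 0 (Nat.zero_le _)] at hdvd
  rcases hα i with ⟨hv0, hvn, -⟩ | ⟨hvn, hv0, -⟩ <;> simpa [hv0, hvn] using hdvd

theorem theorem_1_1 (n : ℕ) (hn : 1 ≤ n) (a : ℕ → ℤ)
    (ha0 : a 0 ≠ 0) (han : a n ≠ 0)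
    (k : ℕ) (hk : 2 ≤ k) (p : Fin k → ℕ) (hp : ∀ i, (p i).Prime)
    (hpp : Function.Injective p)
    (α : Fin k → ℕ)
    (hα : ∀ i, (padicValInt (p i) (a 0) = 0 ∧ padicValInt (p i) (a n) = α i ∧ α i ≠ 0) ∨
               (padicValInt (p i) (a n) = 0 ∧ padicValInt (p i) (a 0) = α i ∧ α i ≠ 0))
    (hineq : ∀ i, ∀ j, 1 ≤ j → j ≤ n - 1 →
      n * padicValInt (p i) (a j) ≥
        (n - j) * padicValInt (p i) (a 0) + j * padicValInt (p i) (a n))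
    (hgcd : Finset.univ.gcd (fun i => Nat.gcd (α i) n) = 1) :
    Irreducible ((∑ i ∈ range (n+1), C (a i) * X ^ i).map (Int.castRingHom ℚ)) :=
  theorem_1_1_general n hn a ha0 han k p hp α hα hineq hgcd
end
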